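/- Let n ≥ 1, let ρ be a density matrix indexed by Fin n × Fin n, let U be an n × n unitary matrix with unitary channel Φ_U(X) = U X U*, and let Φ₂¹, Φ₁², Φ₂² : Matrix (Fin n) (Fin n) ℂ → Matrix (Fin n) (Fin n) ℂ be quantum channels. Then there exists a density matrix σ indexed by Fin n × Fin n × Fin n × Fin n with Tr₂₄ σ = (Φ_U ⊗ Φ₁²)(ρ), Tr₂₃ σ = (Φ_U ⊗ Φ₂²)(ρ), Tr₁₄ σ = (Φ₂¹ ⊗ Φ₁²)(ρ), Tr₁₃ σ = (Φ₂¹ ⊗ Φ₂²)(ρ) if and only if there exists a density matrix σ' with Tr₂₄ σ' = (id ⊗ Φ₁²)(ρ), Tr₂₃ σ' = (id ⊗ Φ₂²)(ρ), Tr₁₄ σ' = (Φ₂¹ ⊗ Φ₁²)(ρ), Tr₁₃ σ' = (Φ₂¹ ⊗ Φ₂²)(ρ). (The bipartite biconditional state with one unitary channel is Bell nonlocal if and only if the one with that channel replaced by the identity is.) -/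

import Mathlib

/-!
Conjugation `σ ↦ (U ⊗ 1) σ (U ⊗ 1)ᴴ` on the first factor is a bijection of density matrices.
It commutes with the partial traces that keep the first factor and is invisible to those that
trace it out (there `UᴴU = 1` cancels it), while `(Φ_U ⊗ Ψ)(ρ) = (U ⊗ 1) (id ⊗ Ψ)(ρ) (U ⊗ 1)ᴴ`.
Hence it carries the solutions `σ'` of the second system exactly onto the solutions `σ` of the
first.
-/

open Matrix BigOperators
open scoped ComplexOrder

noncomputable section

/-- A density matrix: positive semidefinite with trace 1. -/
def IsDensity {ι : Type*} [Fintype ι] (M : Matrix ι ι ℂ) : Prop :=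
  M.PosSemidef ∧ M.trace = 1

/-- The Choi matrix of a linear map between matrix spaces, indexed by (output × input). -/
def choi {ι κ : Type*} [Fintype ι] [DecidableEq ι]
    (Φ : Matrix ι ι ℂ →ₗ[ℂ] Matrix κ κ ℂ) : Matrix (κ × ι) (κ × ι) ℂ :=
  fun p q => Φ (Matrix.single p.2 q.2 1) p.1 q.1

/-- A quantum channel: trace preserving with positive semidefinite Choi matrix. -/
def IsQChannel {ι κ : Type*} [Fintype ι] [DecidableEq ι] [Fintype κ]
    (Φ : Matrix ι ι ℂ →ₗ[ℂ] Matrix κ κ ℂ) : Prop :=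
  (∀ X, (Φ X).trace = X.trace) ∧ (choi Φ).PosSemidef

/-- The tensor product `Φ ⊗ Ψ` of maps on matrix spaces, determined by
`(Φ ⊗ Ψ)(X ⊗ₖ Y) = (Φ X) ⊗ₖ (Ψ Y)`. -/
def tmap {α β γ δ : Type*} [Fintype α] [DecidableEq α] [Fintype γ] [DecidableEq γ]
    (Φ : Matrix α α ℂ → Matrix β β ℂ) (Ψ : Matrix γ γ ℂ → Matrix δ δ ℂ)
    (M : Matrix (α × γ) (α × γ) ℂ) : Matrix (β × δ) (β × δ) ℂ :=
  fun p q => ∑ a, ∑ a', ∑ c, ∑ c', M (a, c) (a', c') *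
    (Φ (Matrix.single a a' 1) p.1 q.1 * Ψ (Matrix.single c c' 1) p.2 q.2)

/-- Partial trace over the second factor of a bipartite matrix. -/
def ptr2 {α β : Type*} [Fintype β] (M : Matrix (α × β) (α × β) ℂ) : Matrix α α ℂ :=
  fun a a' => ∑ b, M (a, b) (a', b)

/-- Partial trace over the first factor of a bipartite matrix. -/
def ptr1 {α β : Type*} [Fintype α] (M : Matrix (α × β) (α × β) ℂ) : Matrix β β ℂ :=
  fun b b' => ∑ a, M (a, b) (a, b')

/-- Compatibility of two quantum channels: they arise as the two marginals of a single
channel into the tensor product. -/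
def Compatible {n : ℕ} (Φ₁ Φ₂ : Matrix (Fin n) (Fin n) ℂ →ₗ[ℂ] Matrix (Fin n) (Fin n) ℂ) : Prop :=
  ∃ Φ : Matrix (Fin n) (Fin n) ℂ →ₗ[ℂ] Matrix (Fin n × Fin n) (Fin n × Fin n) ℂ,
    IsQChannel Φ ∧ ∀ ρ : Matrix (Fin n) (Fin n) ℂ, IsDensity ρ →
      ptr2 (Φ ρ) = Φ₁ ρ ∧ ptr1 (Φ ρ) = Φ₂ ρ

/-- Trace out factors 2 and 4 of a 4-partite matrix. -/
def tr24 {α β γ δ : Type*} [Fintype β] [Fintype δ]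
    (M : Matrix (α × β × γ × δ) (α × β × γ × δ) ℂ) : Matrix (α × γ) (α × γ) ℂ :=
  fun p q => ∑ b, ∑ d, M (p.1, b, p.2, d) (q.1, b, q.2, d)

/-- Trace out factors 2 and 3 of a 4-partite matrix. -/
def tr23 {α β γ δ : Type*} [Fintype β] [Fintype γ]
    (M : Matrix (α × β × γ × δ) (α × β × γ × δ) ℂ) : Matrix (α × δ) (α × δ) ℂ :=
  fun p q => ∑ b, ∑ c, M (p.1, b, c, p.2) (q.1, b, c, q.2)

/-- Trace out factors 1 and 4 of a 4-partite matrix. -/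
def tr14 {α β γ δ : Type*} [Fintype α] [Fintype δ]
    (M : Matrix (α × β × γ × δ) (α × β × γ × δ) ℂ) : Matrix (β × γ) (β × γ) ℂ :=
  fun p q => ∑ a, ∑ d, M (a, p.1, p.2, d) (a, q.1, q.2, d)

/-- Trace out factors 1 and 3 of a 4-partite matrix. -/
def tr13 {α β γ δ : Type*} [Fintype α] [Fintype γ]
    (M : Matrix (α × β × γ × δ) (α × β × γ × δ) ℂ) : Matrix (β × δ) (β × δ) ℂ :=
  fun p q => ∑ a, ∑ c, M (a, p.1, c, p.2) (a, q.1, c, q.2)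

open Kronecker Unitary

section ConjFst

variable {α : Type*} (κ : Type*) [Fintype α] [DecidableEq α] [Fintype κ] [DecidableEq κ]

def conjFst (u : unitary (Matrix α α ℂ)) :
    Matrix (α × κ) (α × κ) ℂ ≃⋆ₐ[ℂ] Matrix (α × κ) (α × κ) ℂ :=
  conjStarAlgAut ℂ _ ⟨(u : Matrix α α ℂ) ⊗ₖ 1, kronecker_mem_unitary u.2 (one_mem _)⟩

variable {κ} (u : unitary (Matrix α α ℂ))

lemma conjFst_apply (M : Matrix (α × κ) (α × κ) ℂ) :
    conjFst κ u M = ((u : Matrix α α ℂ) ⊗ₖ 1) * M * ((u : Matrix α α ℂ) ⊗ₖ 1)ᴴ :=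
  rfl

lemma conjFst_apply_apply (M : Matrix (α × κ) (α × κ) ℂ) (a b : α) (x y : κ) :
    conjFst κ u M (a, x) (b, y) = ∑ a', ∑ b', u a a' * M (a', x) (b', y) * star (u b b') := by
  simp only [conjFst_apply, conjTranspose_kronecker, conjTranspose_one, mul_apply,
    Fintype.sum_prod_type, kroneckerMap_apply, one_apply, conjTranspose_apply, mul_ite,
    mul_one, mul_zero, ite_mul, zero_mul, Finset.sum_ite_eq, Finset.sum_ite_eq',
    Finset.mem_univ, if_true, Finset.sum_mul]
  exact Finset.sum_comm

lemma conjFst_kronecker (A : Matrix α α ℂ) (B : Matrix κ κ ℂ) :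
    conjFst κ u (A ⊗ₖ B) = ((u : Matrix α α ℂ) * A * (u : Matrix α α ℂ)ᴴ) ⊗ₖ B := by
  rw [conjFst_apply, conjTranspose_kronecker, conjTranspose_one, ← mul_kronecker_mul,
    ← mul_kronecker_mul, Matrix.one_mul, Matrix.mul_one]

lemma isDensity_conjFst_iff {M : Matrix (α × κ) (α × κ) ℂ} :
    IsDensity (conjFst κ u M) ↔ IsDensity M := by
  rw [IsDensity, IsDensity, conjFst, conjStarAlgAut_apply,
    isUnit_coe.posSemidef_star_right_conjugate_iff, trace_mul_cycle, coe_star_mul_self,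
    Matrix.one_mul]

lemma sum_mul_mul_star_unitary (a' b' : α) (C : ℂ) :
    ∑ a, u a a' * C * star (u a b') = if b' = a' then C else 0 := by
  have h := congr_fun₂ (coe_star_mul_self u) b' a'
  simp only [star_eq_conjTranspose, mul_apply, conjTranspose_apply, one_apply] at h
  calc ∑ a, u a a' * C * star (u a b') = (∑ a, star (u a b') * u a a') * C := by
        rw [Finset.sum_mul]
        exact Finset.sum_congr rfl fun _ _ => by ring
    _ = if b' = a' then C else 0 := by rw [h, ite_mul, one_mul, zero_mul]

end ConjFst

lemma tmap_eq_sum {α β γ δ : Type*} [Fintype α] [DecidableEq α] [Fintype γ] [DecidableEq γ]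
    (Φ : Matrix α α ℂ → Matrix β β ℂ) (Ψ : Matrix γ γ ℂ → Matrix δ δ ℂ)
    (M : Matrix (α × γ) (α × γ) ℂ) :
    tmap Φ Ψ M = ∑ a, ∑ a', ∑ c, ∑ c', M (a, c) (a', c') •
      (Φ (single a a' 1) ⊗ₖ Ψ (single c c' 1)) := by
  ext p q
  simp only [tmap, Matrix.sum_apply, Matrix.smul_apply, kroneckerMap_apply, smul_eq_mul]

lemma tmap_conj_left {α β γ δ : Type*} [Fintype α] [DecidableEq α] [Fintype β] [DecidableEq β]
    [Fintype γ] [DecidableEq γ] [Fintype δ] [DecidableEq δ] (u : unitary (Matrix β β ℂ))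
    (Φ : Matrix α α ℂ → Matrix β β ℂ) (Ψ : Matrix γ γ ℂ → Matrix δ δ ℂ)
    (M : Matrix (α × γ) (α × γ) ℂ) :
    tmap (fun X => (u : Matrix β β ℂ) * Φ X * (u : Matrix β β ℂ)ᴴ) Ψ M
      = conjFst δ u (tmap Φ Ψ M) := by
  simp only [tmap_eq_sum, map_sum, map_smul, conjFst_kronecker]

section PartialTrace

variable {α β γ δ : Type*} [Fintype α] [DecidableEq α] [Fintype β] [DecidableEq β]
  [Fintype γ] [DecidableEq γ] [Fintype δ] [DecidableEq δ] (u : unitary (Matrix α α ℂ))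
  (σ : Matrix (α × β × γ × δ) (α × β × γ × δ) ℂ)

lemma tr24_conjFst : tr24 (conjFst (β × γ × δ) u σ) = conjFst γ u (tr24 σ) := by
  ext ⟨a, c⟩ ⟨b, c'⟩
  simp only [tr24, conjFst_apply_apply, Finset.mul_sum, Finset.sum_mul]
  rw [Finset.sum_comm_cycle]
  exact Finset.sum_congr rfl fun _ _ => Finset.sum_comm_cycle

lemma tr23_conjFst : tr23 (conjFst (β × γ × δ) u σ) = conjFst δ u (tr23 σ) := by
  ext ⟨a, d⟩ ⟨b, d'⟩
  simp only [tr23, conjFst_apply_apply, Finset.mul_sum, Finset.sum_mul]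
  rw [Finset.sum_comm_cycle]
  exact Finset.sum_congr rfl fun _ _ => Finset.sum_comm_cycle

lemma tr14_conjFst : tr14 (conjFst (β × γ × δ) u σ) = tr14 σ := by
  ext p q
  simp only [tr14, conjFst_apply_apply]
  rw [Finset.sum_comm, Finset.sum_comm (s := Finset.univ (α := α))]
  refine Finset.sum_congr rfl fun _ _ => ?_
  rw [Finset.sum_comm_cycle, Finset.sum_comm_cycle]
  simp only [sum_mul_mul_star_unitary, Finset.sum_ite_eq', Finset.mem_univ, if_true]

lemma tr13_conjFst : tr13 (conjFst (β × γ × δ) u σ) = tr13 σ := by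
  ext p q
  simp only [tr13, conjFst_apply_apply]
  rw [Finset.sum_comm, Finset.sum_comm (s := Finset.univ (α := α))]
  refine Finset.sum_congr rfl fun _ _ => ?_
  rw [Finset.sum_comm_cycle, Finset.sum_comm_cycle]
  simp only [sum_mul_mul_star_unitary, Finset.sum_ite_eq', Finset.mem_univ, if_true]

end PartialTrace

theorem bell_local_unitary_iff_id_general {n : ℕ}
    (ρ : Matrix (Fin n × Fin n) (Fin n × Fin n) ℂ)
    (U : Matrix (Fin n) (Fin n) ℂ) (hU : U ∈ Matrix.unitaryGroup (Fin n) ℂ)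
    (Φ₂₁ Φ₁₂ Φ₂₂ : Matrix (Fin n) (Fin n) ℂ →ₗ[ℂ] Matrix (Fin n) (Fin n) ℂ) :
    (∃ σ : Matrix (Fin n × Fin n × Fin n × Fin n) (Fin n × Fin n × Fin n × Fin n) ℂ,
      IsDensity σ ∧
      tr24 σ = tmap (fun X => U * X * Uᴴ) (⇑Φ₁₂) ρ ∧
      tr23 σ = tmap (fun X => U * X * Uᴴ) (⇑Φ₂₂) ρ ∧
      tr14 σ = tmap (⇑Φ₂₁) (⇑Φ₁₂) ρ ∧
      tr13 σ = tmap (⇑Φ₂₁) (⇑Φ₂₂) ρ) ↔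
    (∃ σ' : Matrix (Fin n × Fin n × Fin n × Fin n) (Fin n × Fin n × Fin n × Fin n) ℂ,
      IsDensity σ' ∧
      tr24 σ' = tmap id (⇑Φ₁₂) ρ ∧
      tr23 σ' = tmap id (⇑Φ₂₂) ρ ∧
      tr14 σ' = tmap (⇑Φ₂₁) (⇑Φ₁₂) ρ ∧
      tr13 σ' = tmap (⇑Φ₂₁) (⇑Φ₂₂) ρ) := by
  let u : unitary (Matrix (Fin n) (Fin n) ℂ) := ⟨U, hU⟩
  have htmap (Ψ : Matrix (Fin n) (Fin n) ℂ → Matrix (Fin n) (Fin n) ℂ) :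
      tmap (fun X => U * X * Uᴴ) Ψ ρ = conjFst (Fin n) u (tmap id Ψ ρ) :=
    tmap_conj_left u id Ψ ρ
  refine (EquivLike.surjective (conjFst (Fin n × Fin n × Fin n) u)).exists.trans
    (exists_congr fun σ => ?_)
  rw [isDensity_conjFst_iff, tr24_conjFst, tr23_conjFst, tr14_conjFst, tr13_conjFst, htmap,
    htmap, EmbeddingLike.apply_eq_iff_eq, EmbeddingLike.apply_eq_iff_eq]

/-- the bipartite biconditional state with one unitary channel is Bell
nonlocal iff the one with that channel replaced by the identity channel is. -/
theorem bell_local_unitary_iff_id {n : ℕ} (hn : 1 ≤ n)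
    (ρ : Matrix (Fin n × Fin n) (Fin n × Fin n) ℂ) (hρ : IsDensity ρ)
    (U : Matrix (Fin n) (Fin n) ℂ) (hU : U ∈ Matrix.unitaryGroup (Fin n) ℂ)
    (Φ₂₁ Φ₁₂ Φ₂₂ : Matrix (Fin n) (Fin n) ℂ →ₗ[ℂ] Matrix (Fin n) (Fin n) ℂ)
    (hΦ₂₁ : IsQChannel Φ₂₁) (hΦ₁₂ : IsQChannel Φ₁₂) (hΦ₂₂ : IsQChannel Φ₂₂) :
    (∃ σ : Matrix (Fin n × Fin n × Fin n × Fin n) (Fin n × Fin n × Fin n × Fin n) ℂ,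
      IsDensity σ ∧
      tr24 σ = tmap (fun X => U * X * Uᴴ) (⇑Φ₁₂) ρ ∧
      tr23 σ = tmap (fun X => U * X * Uᴴ) (⇑Φ₂₂) ρ ∧
      tr14 σ = tmap (⇑Φ₂₁) (⇑Φ₁₂) ρ ∧
      tr13 σ = tmap (⇑Φ₂₁) (⇑Φ₂₂) ρ) ↔
    (∃ σ' : Matrix (Fin n × Fin n × Fin n × Fin n) (Fin n × Fin n × Fin n × Fin n) ℂ,
      IsDensity σ' ∧
      tr24 σ' = tmap id (⇑Φ₁₂) ρ ∧
      tr23 σ' = tmap id (⇑Φ₂₂) ρ ∧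
      tr14 σ' = tmap (⇑Φ₂₁) (⇑Φ₁₂) ρ ∧
      tr13 σ' = tmap (⇑Φ₂₁) (⇑Φ₂₂) ρ) :=
  bell_local_unitary_iff_id_general ρ U hU Φ₂₁ Φ₁₂ Φ₂₂

end
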